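/- For every integer r ≥ 3 there exists N such that for all n ≥ N the following holds: for every nonempty X ⊆ [2,n] such that the star 𝒮 is optimal for X among MLCIFs, writing m = max X, the left-compressed intersecting families in ([n] choose r) which are LCIF-optimal for X are precisely the LCIFs 𝒜 with AHM_m ⊆ 𝒜 ⊆ 𝒮. -/

import Mathlib

open Finset

/-- The family of all `r`-element subsets of `[n] = {1, …, n}`. -/
def chooseFam (n r : ℕ) : Finset (Finset ℕ) := (Finset.Icc 1 n).powersetCard r

/-- A family of sets is intersecting if any two members meet. -/
def IntersectingFam (𝒜 : Finset (Finset ℕ)) : Prop :=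
  ∀ A ∈ 𝒜, ∀ B ∈ 𝒜, (A ∩ B).Nonempty

/-- `DomLE B A` : writing the elements in increasing order, the `i`-th element
of `B` is at most the `i`-th element of `A` (and they have the same size). -/
def DomLE (B A : Finset ℕ) : Prop :=
  B.card = A.card ∧
  ∀ (i : ℕ) (hB : i < (B.sort (· ≤ ·)).length) (hA : i < (A.sort (· ≤ ·)).length),
    (B.sort (· ≤ ·)).get ⟨i, hB⟩ ≤ (A.sort (· ≤ ·)).get ⟨i, hA⟩

/-- A family of `r`-subsets of `[n]` is left-compressed if it is downward closed
under the domination order. -/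
def LeftCompressed (n r : ℕ) (𝒜 : Finset (Finset ℕ)) : Prop :=
  ∀ A ∈ 𝒜, ∀ B ∈ chooseFam n r, DomLE B A → B ∈ 𝒜

/-- A left-compressed intersecting family in `([n] choose r)`. -/
def IsLCIF (n r : ℕ) (𝒜 : Finset (Finset ℕ)) : Prop :=
  𝒜 ⊆ chooseFam n r ∧ IntersectingFam 𝒜 ∧ LeftCompressed n r 𝒜

/-- A maximal left-compressed intersecting family. -/
def IsMLCIF (n r : ℕ) (𝒜 : Finset (Finset ℕ)) : Prop :=
  IsLCIF n r 𝒜 ∧ ∀ ℬ : Finset (Finset ℕ), IsLCIF n r ℬ → 𝒜 ⊆ ℬ → ℬ = 𝒜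

/-- The number of members of `𝒜` hitting `X`. -/
def hit (X : Finset ℕ) (𝒜 : Finset (Finset ℕ)) : ℕ :=
  (𝒜.filter fun A => (A ∩ X).Nonempty).card

/-- An MLCIF optimal for `X`: it maximises `hit X` among all MLCIFs. -/
def OptimalMLCIF (n r : ℕ) (X : Finset ℕ) (𝒜 : Finset (Finset ℕ)) : Prop :=
  IsMLCIF n r 𝒜 ∧ ∀ ℬ : Finset (Finset ℕ), IsMLCIF n r ℬ → hit X ℬ ≤ hit X 𝒜

/-- An LCIF optimal for `X` among all LCIFs. -/
def OptimalLCIF (n r : ℕ) (X : Finset ℕ) (𝒜 : Finset (Finset ℕ)) : Prop :=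
  IsLCIF n r 𝒜 ∧ ∀ ℬ : Finset (Finset ℕ), IsLCIF n r ℬ → hit X ℬ ≤ hit X 𝒜

/-- The `t`-adjusted Hilton–Milner family. -/
def AHM (n r t : ℕ) : Finset (Finset ℕ) :=
  (chooseFam n r).filter fun A =>
    (1 ∈ A ∧ (A ∩ Finset.Icc 2 t).Nonempty) ∨ Finset.Icc 2 t ⊆ A

/-- The star: all `r`-subsets of `[n]` containing `1`. -/
def starFam (n r : ℕ) : Finset (Finset ℕ) :=
  (chooseFam n r).filter fun A => 1 ∈ A

/-- `G ⊆ [n]` is a potential generator of `𝒜`: every `A ∈ ([n] choose r)`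
containing `G` lies in `𝒜`. -/
def PotGen (n r : ℕ) (𝒜 : Finset (Finset ℕ)) (G : Finset ℕ) : Prop :=
  G ⊆ Finset.Icc 1 n ∧ ∀ A ∈ chooseFam n r, G ⊆ A → A ∈ 𝒜

open Classical in
/-- The canonical generating family: all inclusion-minimal potential generators. -/
noncomputable def canonGen (n r : ℕ) (𝒜 : Finset (Finset ℕ)) : Finset (Finset ℕ) :=
  (Finset.Icc 1 n).powerset.filter fun G =>
    PotGen n r 𝒜 G ∧ ∀ G' ⊆ G, PotGen n r 𝒜 G' → G' = G

/-- The rank of `𝒜`: the smallest size of a generator. -/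
noncomputable def rankFam (n r : ℕ) (𝒜 : Finset (Finset ℕ)) : ℕ :=
  sInf {k : ℕ | ∃ G ∈ canonGen n r 𝒜, G.card = k}

/-- The family generated by `𝒢` with respect to `n` and `r`. -/
def genFam (n r : ℕ) (𝒢 : Finset (Finset ℕ)) : Finset (Finset ℕ) :=
  (chooseFam n r).filter fun A => ∃ G ∈ 𝒢, G ⊆ A

/-- `𝒜 ∈ I_j`: an MLCIF of rank two whose generators of size two are precisely
`{1,2}, {1,3}, …, {1,j}`. -/
noncomputable def MemI (n r j : ℕ) (𝒜 : Finset (Finset ℕ)) : Prop :=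
  IsMLCIF n r 𝒜 ∧ rankFam n r 𝒜 = 2 ∧
    (canonGen n r 𝒜).filter (fun G => G.card = 2) =
      (Finset.Icc 2 j).image fun i => ({1, i} : Finset ℕ)

/-!
Every LCIF lies in an MLCIF, so the star, being optimal among MLCIFs, is optimal among all
LCIFs, and the LCIF-optimal families are the LCIFs `𝒜` with `hit X 𝒜 = hit X 𝒮`.

If `m ≤ r + 1`, the family `AHM_{max m 3}` would beat the star, so `m ≥ r + 2`. The heart of
the matter is that, for `n` large, an LCIF `𝒜` with a member avoiding `1` is strictly worse than
the star. Either `𝒜 ⊆ F₂ = AHM_3`, and `F₂`, which does no better than the star, never ties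
with it (a direct count of the sets of `F₂ \ 𝒮` and of `𝒮 \ F₂` meeting `X`); or the members
of `𝒜` avoiding `1` all contain one of at most `2 ^ (r + 1)` fixed triples, so there are
`O(n ^ (r - 3))` of them, while `𝒜` misses the `Ω(n ^ (r - 2))` star sets through `m` disjoint
from `[2, r + 1] ∈ 𝒜`.

Hence an optimal `𝒜` lies in the star and contains every star set meeting `X`. Any set of
`AHM_m` containing `1` is dominated by such a set (push an element of `[2, m]` up to `m`), so
left-compression gives `AHM_m ⊆ 𝒜`. Conversely, every star set meeting `X ⊆ [2, m]` is in `AHM_m`.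
-/

section Domination

lemma card_filter_le_eq_card_filter_orderEmbOfFin (A : Finset ℕ) (v : ℕ) :
    #{a ∈ A | a ≤ v} = #{i | A.orderEmbOfFin rfl i ≤ v} := by
  conv_lhs => rw [← A.map_orderEmbOfFin_univ rfl, filter_map, card_map]
  rfl

lemma lt_card_filter_le_iff (A : Finset ℕ) (i : Fin #A) (v : ℕ) :
    (i : ℕ) < #{a ∈ A | a ≤ v} ↔ A.orderEmbOfFin rfl i ≤ v := by
  set f := A.orderEmbOfFin rfl
  rw [card_filter_le_eq_card_filter_orderEmbOfFin]
  constructor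
  · intro hi
    by_contra! hv
    have hsub : ({j | f j ≤ v} : Finset (Fin #A)) ⊆ Iio i := fun j hj =>
      mem_Iio.2 (f.lt_iff_lt.1 ((mem_filter.1 hj).2.trans_lt hv))
    exact hi.not_ge ((card_le_card hsub).trans_eq (Fin.card_Iio i))
  · intro hv
    have hsub : Iic i ⊆ ({j | f j ≤ v} : Finset (Fin #A)) := fun j hj =>
      mem_filter.2 ⟨mem_univ j, (f.monotone (mem_Iic.1 hj)).trans hv⟩
    calc (i : ℕ) < #(Iic i) := by rw [Fin.card_Iic]; exact Nat.lt_succ_self _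
      _ ≤ _ := card_le_card hsub

lemma sort_get_eq_orderEmbOfFin (A : Finset ℕ) (i : ℕ) (h : i < (A.sort (· ≤ ·)).length) :
    (A.sort (· ≤ ·)).get ⟨i, h⟩ = A.orderEmbOfFin rfl ⟨i, by simpa using h⟩ := by
  rw [orderEmbOfFin_apply]
  rfl

lemma domLE_iff {B A : Finset ℕ} :
    DomLE B A ↔ #B = #A ∧ ∀ v, #{a ∈ A | a ≤ v} ≤ #{b ∈ B | b ≤ v} := by
  refine ⟨fun ⟨hcard, hget⟩ => ⟨hcard, fun v => ?_⟩, fun ⟨hcard, hcnt⟩ => ⟨hcard, ?_⟩⟩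
  · by_contra! hlt
    set c := #{b ∈ B | b ≤ v}
    have hcA : c < #A := hlt.trans_le (card_filter_le _ _)
    have hB : c < (B.sort (· ≤ ·)).length := by simpa [hcard] using hcA
    have hle := hget c hB (by simpa using hcA)
    rw [sort_get_eq_orderEmbOfFin, sort_get_eq_orderEmbOfFin] at hle
    exact (lt_card_filter_le_iff B ⟨c, by simpa using hB⟩ v).2
      (hle.trans ((lt_card_filter_le_iff A ⟨c, hcA⟩ v).1 hlt)) |>.false
  · intro i hB hA
    rw [sort_get_eq_orderEmbOfFin, sort_get_eq_orderEmbOfFin]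
    apply (lt_card_filter_le_iff B _ _).1
    exact ((lt_card_filter_le_iff A ⟨i, by simpa using hA⟩ _).2 le_rfl).trans_le (hcnt _)

lemma domLE_insert_erase {A : Finset ℕ} {x m : ℕ} (hx : x ∈ A) (hm : m ∉ A) (hxm : x ≤ m) :
    DomLE A (insert m (A.erase x)) := by
  have hm' : m ∉ A.erase x := fun h => hm (mem_of_mem_erase h)
  refine domLE_iff.2 ⟨by rw [card_insert_of_notMem hm', card_erase_add_one hx], fun v => ?_⟩
  rw [filter_insert, filter_erase]
  split_ifs with hmv
  · have hxv : x ∈ {a ∈ A | a ≤ v} := mem_filter.2 ⟨hx, hxm.trans hmv⟩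
    rw [card_insert_of_notMem fun h => hm (mem_filter.1 (mem_of_mem_erase h)).1,
      card_erase_add_one hxv]
  · exact card_erase_le

end Domination

section Counting

lemma card_filter_le_le_of_subset_Icc {A : Finset ℕ} {a b : ℕ} (hA : A ⊆ Icc a b) (v : ℕ) :
    #{x ∈ A | x ≤ v} ≤ v + 1 - a := by
  have hsub : {x ∈ A | x ≤ v} ⊆ Icc a v := fun x hx => by
    rw [mem_filter] at hx
    exact mem_Icc.2 ⟨(mem_Icc.1 (hA hx.1)).1, hx.2⟩
  simpa using card_le_card hsub

lemma card_filter_Icc_le (a b v : ℕ) : #{x ∈ Icc a b | x ≤ v} = min b v + 1 - a := by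
  rw [show {x ∈ Icc a b | x ≤ v} = Icc a (min b v) by
    ext; simp only [mem_filter, mem_Icc, le_min_iff]; omega, Nat.card_Icc]

lemma subset_Icc_two_of_one_notMem {A : Finset ℕ} {n : ℕ} (hA : A ⊆ Icc 1 n) (h1 : 1 ∉ A) :
    A ⊆ Icc 2 n := fun a ha => by
  have := mem_Icc.1 (hA ha)
  have : a ≠ 1 := fun h => h1 (h ▸ ha)
  exact mem_Icc.2 ⟨by omega, by omega⟩

end Counting

section ChooseFam

variable {n r : ℕ}

lemma mem_chooseFam {A : Finset ℕ} : A ∈ chooseFam n r ↔ A ⊆ Icc 1 n ∧ #A = r :=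
  mem_powersetCard

lemma Icc_two_mem_chooseFam (hn : r + 1 ≤ n) : Icc 2 (r + 1) ∈ chooseFam n r :=
  mem_chooseFam.2 ⟨Icc_subset_Icc (by omega) hn, by simp⟩

lemma domLE_Icc_two {A : Finset ℕ} (hA : A ∈ chooseFam n r) (h1 : 1 ∉ A) :
    DomLE (Icc 2 (r + 1)) A := by
  obtain ⟨hA, hAr⟩ := mem_chooseFam.1 hA
  refine domLE_iff.2 ⟨by simp [hAr], fun v => ?_⟩
  have h₁ := card_filter_le_le_of_subset_Icc (subset_Icc_two_of_one_notMem hA h1) v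
  have h₂ := (card_filter_le A (· ≤ v)).trans_eq hAr
  rw [card_filter_Icc_le]
  omega

lemma domLE_Icc_sdiff {W P : Finset ℕ} (hW : W ∈ chooseFam n r) (hW1 : 1 ∉ W)
    (hW23 : ¬ {2, 3} ⊆ W) (hP : P ⊆ Icc 2 (r + 2)) (hPc : #P = 2) :
    DomLE (Icc 1 (r + 2) \ P) W := by
  obtain ⟨hWn, hWr⟩ := mem_chooseFam.1 hW
  have hW2 := subset_Icc_two_of_one_notMem hWn hW1
  have hP1 : P ⊆ Icc 1 (r + 2) := hP.trans (Icc_subset_Icc_left (by omega))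
  refine domLE_iff.2
    ⟨by rw [card_sdiff_of_subset hP1, Nat.card_Icc, hPc, hWr]; omega, fun v => ?_⟩
  have hW₁ := card_filter_le_le_of_subset_Icc hW2 v
  have hW₂ := (card_filter_le W (· ≤ v)).trans_eq hWr
  have hW₃ : 3 ≤ v → #{w ∈ W | w ≤ v} ≤ v - 2 := fun hv => by
    obtain ⟨c, hc, hcW⟩ : ∃ c ∈ Icc 2 v, c ∉ W := by
      by_contra! h
      exact hW23 (insert_subset (h 2 (mem_Icc.2 ⟨le_rfl, by omega⟩))
        (singleton_subset_iff.2 (h 3 (mem_Icc.2 ⟨by omega, hv⟩))))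
    have hsub : {w ∈ W | w ≤ v} ⊆ (Icc 2 v).erase c := fun w hw => by
      rw [mem_filter] at hw
      exact mem_erase.2 ⟨fun h => hcW (h ▸ hw.1), mem_Icc.2 ⟨(mem_Icc.1 (hW2 hw.1)).1, hw.2⟩⟩
    have := card_le_card hsub
    rw [card_erase_of_mem hc, Nat.card_Icc] at this
    omega
  have hB : Icc 1 (min (r + 2) v) \ P ⊆ {b ∈ Icc 1 (r + 2) \ P | b ≤ v} := fun b hb => by
    simp only [mem_sdiff, mem_Icc, mem_filter, le_min_iff] at hb ⊢
    exact ⟨⟨⟨hb.1.1, hb.1.2.1⟩, hb.2⟩, hb.1.2.2⟩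
  have hP₁ : Icc 1 (min (r + 2) v) ∩ P ⊆ {p ∈ P | p ≤ v} := fun p hp => by
    simp only [mem_inter, mem_Icc, mem_filter, le_min_iff] at hp ⊢
    exact ⟨hp.2, hp.1.2.2⟩
  have hk := card_sdiff_add_card_inter (Icc 1 (min (r + 2) v)) P
  have hP₂ := card_filter_le_le_of_subset_Icc hP v
  have hP₃ := (card_filter_le P (· ≤ v)).trans_eq hPc
  have h₁ := card_le_card hB
  have h₂ := card_le_card hP₁
  rw [Nat.card_Icc] at hk
  omega

end ChooseFam

section Hit

variable {X : Finset ℕ} {𝒜 ℬ : Finset (Finset ℕ)}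

lemma hit_mono (h : 𝒜 ⊆ ℬ) : hit X 𝒜 ≤ hit X ℬ :=
  card_le_card (filter_subset_filter _ h)

lemma hit_le_card : hit X 𝒜 ≤ #𝒜 := card_filter_le _ _

lemma hit_eq_card (h : ∀ A ∈ 𝒜, (A ∩ X).Nonempty) : hit X 𝒜 = #𝒜 := by
  rw [hit, filter_true_of_mem h]

lemma hit_sdiff_add_hit_inter (𝒜 ℬ : Finset (Finset ℕ)) :
    hit X (𝒜 \ ℬ) + hit X (𝒜 ∩ ℬ) = hit X 𝒜 := by
  unfold hit
  rw [← card_sdiff_add_card_inter (𝒜.filter fun A => (A ∩ X).Nonempty) ℬ]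
  congr 2 <;> ext A <;> simp only [mem_sdiff, mem_inter, mem_filter] <;> tauto

lemma hit_lt_hit_iff : hit X 𝒜 < hit X ℬ ↔ hit X (𝒜 \ ℬ) < hit X (ℬ \ 𝒜) := by
  have h𝒜 := hit_sdiff_add_hit_inter (X := X) 𝒜 ℬ
  have hℬ := hit_sdiff_add_hit_inter (X := X) ℬ 𝒜
  rw [inter_comm] at hℬ
  omega

lemma filter_subset_of_subset_of_hit_le (h : 𝒜 ⊆ ℬ) (hle : hit X ℬ ≤ hit X 𝒜) :
    ℬ.filter (fun A => (A ∩ X).Nonempty) ⊆ 𝒜 :=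
  (eq_of_subset_of_card_le (filter_subset_filter _ h) hle).symm.subset.trans (filter_subset _ _)

end Hit

def pinnedFam (n r : ℕ) (K Y : Finset ℕ) : Finset (Finset ℕ) :=
  (chooseFam n r).filter fun A => K ⊆ A ∧ Disjoint A Y

section Pinned

variable {n r : ℕ} {K Y : Finset ℕ}

lemma mem_pinnedFam {A : Finset ℕ} :
    A ∈ pinnedFam n r K Y ↔ A ∈ chooseFam n r ∧ K ⊆ A ∧ Disjoint A Y :=
  mem_filter

lemma pinnedFam_anti {K' Y' : Finset ℕ} (hK : K' ⊆ K) (hY : Y' ⊆ Y) :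
    pinnedFam n r K Y ⊆ pinnedFam n r K' Y' := fun A hA => by
  obtain ⟨hA, hKA, hAY⟩ := mem_pinnedFam.1 hA
  exact mem_pinnedFam.2 ⟨hA, hK.trans hKA, hAY.mono_right hY⟩

lemma card_filter_pinnedFam (hK : K ⊆ Icc 1 n) (hKY : Disjoint K Y) (hKr : #K ≤ r)
    (p : Finset ℕ → Prop) [DecidablePred p] (hp : ∀ T, p (T ∪ K) ↔ p T) :
    #{A ∈ pinnedFam n r K Y | p A} =
      #{T ∈ (Icc 1 n \ (K ∪ Y)).powersetCard (r - #K) | p T} := by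
  apply card_nbij' (· \ K) (· ∪ K)
  · intro A hA
    simp only [coe_filter, Set.mem_ofPred_eq, mem_pinnedFam, mem_chooseFam] at hA ⊢
    obtain ⟨⟨⟨hA, hAr⟩, hKA, hAY⟩, hpA⟩ := hA
    refine ⟨mem_powersetCard.2 ⟨fun a ha => ?_, by rw [card_sdiff_of_subset hKA, hAr]⟩, ?_⟩
    · obtain ⟨haA, haK⟩ := mem_sdiff.1 ha
      exact mem_sdiff.2 ⟨hA haA, by simp [haK, disjoint_left.1 hAY haA]⟩
    · rwa [← hp, sdiff_union_of_subset hKA]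
  · intro T hT
    simp only [coe_filter, Set.mem_ofPred_eq, mem_pinnedFam, mem_chooseFam, mem_powersetCard,
      subset_sdiff, disjoint_union_left, disjoint_union_right] at hT ⊢
    obtain ⟨⟨⟨hT, hTKY⟩, hTr⟩, hpT⟩ := hT
    refine ⟨⟨⟨union_subset hT hK, ?_⟩, subset_union_right, hTKY.2, hKY⟩, (hp T).2 hpT⟩
    rw [card_union_of_disjoint hTKY.1, hTr]
    omega
  · intro A hA
    exact sdiff_union_of_subset (mem_pinnedFam.1 (mem_filter.1 hA).1).2.1
  · intro T hT
    simp only [coe_filter, Set.mem_ofPred_eq, mem_powersetCard, subset_sdiff,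
      disjoint_union_right] at hT
    exact union_sdiff_cancel_right hT.1.1.2.1

lemma card_Icc_sdiff_union (hK : K ⊆ Icc 1 n) (hY : Y ⊆ Icc 1 n) (hKY : Disjoint K Y) :
    #(Icc 1 n \ (K ∪ Y)) = n - #K - #Y := by
  rw [card_sdiff_of_subset (union_subset hK hY), card_union_of_disjoint hKY, Nat.card_Icc]
  omega

lemma card_pinnedFam (hK : K ⊆ Icc 1 n) (hY : Y ⊆ Icc 1 n) (hKY : Disjoint K Y)
    (hKr : #K ≤ r) : #(pinnedFam n r K Y) = (n - #K - #Y).choose (r - #K) := by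
  have h := card_filter_pinnedFam hK hKY hKr (fun _ => True) (fun _ => Iff.rfl)
  rwa [filter_true, filter_true, card_powersetCard, card_Icc_sdiff_union hK hY hKY] at h

lemma hit_pinnedFam {X : Finset ℕ} (hK : K ⊆ Icc 1 n) (hKY : Disjoint K Y) (hKr : #K ≤ r)
    (hKX : Disjoint K X) :
    hit X (pinnedFam n r K Y) = hit X ((Icc 1 n \ (K ∪ Y)).powersetCard (r - #K)) :=
  card_filter_pinnedFam hK hKY hKr _ fun T => by
    rw [union_inter_distrib_right, disjoint_iff_inter_eq_empty.1 hKX, union_empty]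

lemma card_le_mul_choose_of_forall_exists_subset {k : ℕ} {F 𝒯 : Finset (Finset ℕ)}
    (hY : Y ⊆ Icc 1 n) (hkr : k ≤ r) (h𝒯 : ∀ T ∈ 𝒯, T ⊆ Icc 1 n ∧ #T = k ∧ Disjoint T Y)
    (hF : ∀ A ∈ F, A ∈ chooseFam n r ∧ Disjoint A Y ∧ ∃ T ∈ 𝒯, T ⊆ A) :
    #F ≤ #𝒯 * (n - k - #Y).choose (r - k) :=
  calc #F ≤ #(𝒯.biUnion fun T => pinnedFam n r T Y) := card_le_card fun A hA => by
          obtain ⟨hA, hAY, T, hT, hTA⟩ := hF A hA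
          exact mem_biUnion.2 ⟨T, hT, mem_pinnedFam.2 ⟨hA, hTA, hAY⟩⟩
    _ ≤ _ := card_biUnion_le_card_mul _ _ _ fun T hT => by
          obtain ⟨hTn, hTk, hTY⟩ := h𝒯 T hT
          rw [card_pinnedFam hTn hY hTY (hTk ▸ hkr), hTk]

end Pinned

lemma card_filter_powersetCard_mul_le {G : Finset ℕ} {k : ℕ} {p : Finset ℕ → Prop}
    [DecidablePred p] (hp : ∀ ⦃s t⦄, s ⊆ t → p s → p t) :
    #{T ∈ G.powersetCard k | p T} * (#G - k) ≤
      #{T ∈ G.powersetCard (k + 1) | p T} * (k + 1) := by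
  apply card_mul_le_card_mul (· ⊆ ·)
  · intro T hT
    obtain ⟨hT, hpT⟩ := mem_filter.1 hT
    obtain ⟨hTG, hTk⟩ := mem_powersetCard.1 hT
    have hsub : (G \ T).image (insert · T) ⊆
        bipartiteAbove (· ⊆ ·) {T ∈ G.powersetCard (k + 1) | p T} T := fun T' hT' => by
      obtain ⟨y, hy, rfl⟩ := mem_image.1 hT'
      obtain ⟨hyG, hyT⟩ := mem_sdiff.1 hy
      refine (mem_bipartiteAbove _).2
        ⟨mem_filter.2 ⟨mem_powersetCard.2 ⟨insert_subset hyG hTG, ?_⟩, hp (subset_insert _ _) hpT⟩,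
          subset_insert _ _⟩
      rw [card_insert_of_notMem hyT, hTk]
    have hinj : Set.InjOn (insert · T) (G \ T : Finset ℕ) := fun y hy y' _ h =>
      (insert_inj (mem_sdiff.1 hy).2).1 h
    calc #G - k = #(G \ T) := by rw [card_sdiff_of_subset hTG, hTk]
      _ = #((G \ T).image (insert · T)) := (card_image_of_injOn hinj).symm
      _ ≤ _ := card_le_card hsub
  · intro T' hT'
    have hT'k := (mem_powersetCard.1 (mem_filter.1 hT').1).2
    calc #(bipartiteBelow (· ⊆ ·) _ T') ≤ #(T'.powersetCard k) := card_le_card fun T hT => by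
          obtain ⟨hT, hTT'⟩ := (mem_bipartiteBelow _).1 hT
          exact mem_powersetCard.2 ⟨hTT', (mem_powersetCard.1 (mem_filter.1 hT).1).2⟩
      _ = k + 1 := by rw [card_powersetCard, hT'k, Nat.choose_succ_self_right]

section AHM

variable {n r : ℕ}

lemma mem_AHM {t : ℕ} {A : Finset ℕ} :
    A ∈ AHM n r t ↔
      A ∈ chooseFam n r ∧ ((1 ∈ A ∧ (A ∩ Icc 2 t).Nonempty) ∨ Icc 2 t ⊆ A) :=
  mem_filter

lemma exists_mem_Icc_two_of_two_le_card_filter {B : Finset ℕ} (hB : B ⊆ Icc 1 n) {v : ℕ}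
    (h : 2 ≤ #{b ∈ B | b ≤ v}) : ∃ b ∈ B, b ∈ Icc 2 v := by
  obtain ⟨a, ha, b, hb, hab⟩ := one_lt_card.1 h
  rw [mem_filter] at ha hb
  have ha1 := (mem_Icc.1 (hB ha.1)).1
  have hb1 := (mem_Icc.1 (hB hb.1)).1
  rcases eq_or_ne a 1 with rfl | ha1'
  · exact ⟨b, hb.1, mem_Icc.2 ⟨by omega, hb.2⟩⟩
  · exact ⟨a, ha.1, mem_Icc.2 ⟨by omega, ha.2⟩⟩

lemma leftCompressed_AHM {t : ℕ} (ht : 3 ≤ t) : LeftCompressed n r (AHM n r t) := by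
  intro A hA B hB hBA
  obtain ⟨-, hA⟩ := mem_AHM.1 hA
  have hcnt := (domLE_iff.1 hBA).2
  have hBn := (mem_chooseFam.1 hB).1
  have hmeet : ∀ {u w v}, u ∈ A → w ∈ A → u ≠ w → u ≤ v → w ≤ v → ∃ b ∈ B, b ∈ Icc 2 v :=
    fun hu hw huw huv hwv => by
      refine exists_mem_Icc_two_of_two_le_card_filter hBn (le_trans ?_ (hcnt _))
      rw [← card_pair huw]
      exact card_le_card (insert_subset (mem_filter.2 ⟨hu, huv⟩)
        (singleton_subset_iff.2 (mem_filter.2 ⟨hw, hwv⟩)))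
  refine mem_AHM.2 ⟨hB, ?_⟩
  rcases hA with ⟨h1A, x, hx⟩ | hA
  · obtain ⟨hxA, hx2, hxt⟩ := by simpa only [mem_inter, mem_Icc] using hx
    have h1 : 1 ∈ {a ∈ A | a ≤ 1} := mem_filter.2 ⟨h1A, le_rfl⟩
    obtain ⟨b, hb⟩ := card_pos.1 ((card_pos.2 ⟨1, h1⟩).trans_le (hcnt 1))
    rw [mem_filter] at hb
    have hb1 : b = 1 := le_antisymm hb.2 (mem_Icc.1 (hBn hb.1)).1
    obtain ⟨y, hy, hyt⟩ := hmeet h1A hxA (by omega) (by omega) hxt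
    exact Or.inl ⟨hb1 ▸ hb.1, y, mem_inter.2 ⟨hy, hyt⟩⟩
  by_cases h1B : 1 ∈ B
  · have h23 : ∀ {u}, u ∈ Icc 2 3 → u ∈ Icc 2 t := fun hu => by
      rw [mem_Icc] at hu ⊢; omega
    obtain ⟨y, hy, hy3⟩ := hmeet (hA (h23 (by simp))) (hA (h23 (by simp))) (by decide : 2 ≠ 3)
      (by omega : 2 ≤ 3) le_rfl
    exact Or.inl ⟨h1B, y, mem_inter.2 ⟨hy, h23 hy3⟩⟩
  · -- `B ⊆ [2, n]` has at least `v - 1` elements up to `v` for each `v ∈ [2, t]`, so `v ∈ B`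
    refine Or.inr fun v hv => ?_
    obtain ⟨hv2, hvt⟩ := mem_Icc.1 hv
    by_contra hvB
    have hB' : {b ∈ B | b ≤ v} ⊆ Icc 2 (v - 1) := fun b hb => by
      rw [mem_filter] at hb
      have := mem_Icc.1 (hBn hb.1)
      have : b ≠ 1 := fun h => h1B (h ▸ hb.1)
      have : b ≠ v := fun h => hvB (h ▸ hb.1)
      exact mem_Icc.2 ⟨by omega, by omega⟩
    have hA' : Icc 2 v ⊆ {a ∈ A | a ≤ v} := fun a ha =>
      mem_filter.2 ⟨hA (Icc_subset_Icc_right hvt ha), (mem_Icc.1 ha).2⟩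
    have h₁ := card_le_card hB'
    have h₂ := card_le_card hA'
    rw [Nat.card_Icc] at h₁ h₂
    have := hcnt v
    omega

lemma intersectingFam_AHM {t : ℕ} (ht : 2 ≤ t) : IntersectingFam (AHM n r t) := by
  intro A hA B hB
  rcases (mem_AHM.1 hA).2 with ⟨h1A, x, hx⟩ | hA <;>
    rcases (mem_AHM.1 hB).2 with ⟨h1B, y, hy⟩ | hB
  · exact ⟨1, mem_inter.2 ⟨h1A, h1B⟩⟩
  · exact ⟨x, mem_inter.2 ⟨(mem_inter.1 hx).1, hB (mem_inter.1 hx).2⟩⟩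
  · exact ⟨y, mem_inter.2 ⟨hA (mem_inter.1 hy).2, (mem_inter.1 hy).1⟩⟩
  · have h2 : 2 ∈ Icc 2 t := mem_Icc.2 ⟨le_rfl, ht⟩
    exact ⟨2, mem_inter.2 ⟨hA h2, hB h2⟩⟩

lemma isLCIF_AHM {t : ℕ} (ht : 3 ≤ t) : IsLCIF n r (AHM n r t) :=
  ⟨filter_subset _ _, intersectingFam_AHM (by omega), leftCompressed_AHM ht⟩

lemma filter_starFam_subset_AHM {X : Finset ℕ} {t : ℕ} (hX : X ⊆ Icc 2 t) :
    (starFam n r).filter (fun A => (A ∩ X).Nonempty) ⊆ AHM n r t := fun A hA => by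
  obtain ⟨hA, x, hx⟩ := mem_filter.1 hA
  obtain ⟨hA, h1A⟩ := mem_filter.1 hA
  exact mem_AHM.2 ⟨hA, Or.inl ⟨h1A, x, mem_inter.2 ⟨(mem_inter.1 hx).1, hX (mem_inter.1 hx).2⟩⟩⟩

lemma Icc_two_three : Icc 2 3 = {2, 3} := by decide

lemma inter_pair_nonempty_iff {A : Finset ℕ} {a b : ℕ} :
    (A ∩ {a, b}).Nonempty ↔ a ∈ A ∨ b ∈ A := by
  simp only [Finset.Nonempty, mem_inter, mem_insert, mem_singleton]
  constructor
  · rintro ⟨x, hx, rfl | rfl⟩ <;> simp [hx]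
  · rintro (h | h) <;> exact ⟨_, h, by simp⟩

lemma AHM_three_sdiff_starFam : AHM n r 3 \ starFam n r = pinnedFam n r {2, 3} {1} := by
  ext A
  simp only [mem_sdiff, mem_AHM, starFam, mem_filter, mem_pinnedFam, Icc_two_three,
    insert_subset_iff, singleton_subset_iff, disjoint_singleton_right, inter_pair_nonempty_iff]
  tauto

lemma starFam_sdiff_AHM_three : starFam n r \ AHM n r 3 = pinnedFam n r {1} {2, 3} := by
  ext A
  simp only [mem_sdiff, mem_AHM, starFam, mem_filter, mem_pinnedFam, Icc_two_three,
    insert_subset_iff, singleton_subset_iff, disjoint_insert_right, disjoint_singleton_right,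
    inter_pair_nonempty_iff]
  tauto

end AHM

section Optimal

variable {n r : ℕ} {X : Finset ℕ} {𝒜 : Finset (Finset ℕ)}

lemma exists_isMLCIF_superset (h : IsLCIF n r 𝒜) : ∃ ℳ, IsMLCIF n r ℳ ∧ 𝒜 ⊆ ℳ := by
  classical
  set 𝒮 := (chooseFam n r).powerset.filter fun ℬ => IsLCIF n r ℬ ∧ 𝒜 ⊆ ℬ
  have mem_𝒮 : ∀ {ℬ}, IsLCIF n r ℬ → 𝒜 ⊆ ℬ → ℬ ∈ 𝒮 := fun hℬ h𝒜ℬ =>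
    mem_filter.2 ⟨mem_powerset.2 hℬ.1, hℬ, h𝒜ℬ⟩
  obtain ⟨ℳ, hℳ, hmax⟩ := exists_max_image 𝒮 card ⟨𝒜, mem_𝒮 h subset_rfl⟩
  obtain ⟨-, hℳ, h𝒜ℳ⟩ := mem_filter.1 hℳ
  exact ⟨ℳ, ⟨hℳ, fun ℬ hℬ hℳℬ =>
    (eq_of_subset_of_card_le hℳℬ (hmax ℬ (mem_𝒮 hℬ (h𝒜ℳ.trans hℳℬ)))).symm⟩, h𝒜ℳ⟩

lemma hit_le_hit_starFam (hopt : OptimalMLCIF n r X (starFam n r)) (h : IsLCIF n r 𝒜) :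
    hit X 𝒜 ≤ hit X (starFam n r) :=
  let ⟨ℳ, hℳ, h𝒜ℳ⟩ := exists_isMLCIF_superset h
  (hit_mono h𝒜ℳ).trans (hopt.2 ℳ hℳ)

lemma optimalLCIF_iff (hopt : OptimalMLCIF n r X (starFam n r)) :
    OptimalLCIF n r X 𝒜 ↔ IsLCIF n r 𝒜 ∧ hit X (starFam n r) ≤ hit X 𝒜 :=
  ⟨fun h => ⟨h.1, h.2 _ hopt.1.1⟩,
    fun h => ⟨h.1, fun _ hℬ => (hit_le_hit_starFam hopt hℬ).trans h.2⟩⟩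

/-- Otherwise `AHM n r (max m 3)` beats the star: it keeps every star set meeting `X ⊆ [2, m]`
and also contains `[2, r + 1] ∋ m`. -/
lemma add_two_le_of_optimalMLCIF_starFam {m : ℕ} (hr : 2 ≤ r) (hn : r + 1 ≤ n)
    (hX : X ⊆ Icc 2 m) (hmX : m ∈ X) (hopt : OptimalMLCIF n r X (starFam n r)) :
    r + 2 ≤ m := by
  by_contra! hm
  have hm2 := (mem_Icc.1 (hX hmX)).1
  set t := max m 3
  have hXt : X ⊆ Icc 2 t := hX.trans (Icc_subset_Icc_right (le_max_left _ _))
  have hlost : hit X (starFam n r \ AHM n r t) = 0 :=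
    card_eq_zero.2 <| filter_eq_empty_iff.2 fun A hA hAX => (mem_sdiff.1 hA).2 <|
      filter_starFam_subset_AHM hXt (mem_filter.2 ⟨(mem_sdiff.1 hA).1, hAX⟩)
  have hwon : 0 < hit X (AHM n r t \ starFam n r) := by
    refine card_pos.2 ⟨Icc 2 (r + 1), mem_filter.2 ⟨mem_sdiff.2 ⟨?_, ?_⟩, m, ?_⟩⟩
    · exact mem_AHM.2 ⟨Icc_two_mem_chooseFam hn, Or.inr (Icc_subset_Icc_right (by omega))⟩
    · simp [starFam]
    · exact mem_inter.2 ⟨mem_Icc.2 ⟨hm2, by omega⟩, hmX⟩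
  have hlt : hit X (starFam n r) < hit X (AHM n r t) := hit_lt_hit_iff.2 (hlost ▸ hwon)
  exact hlt.not_ge (hit_le_hit_starFam hopt (isLCIF_AHM (le_max_right _ _)))

end Optimal

section Core

variable {n r : ℕ} {X : Finset ℕ} {𝒜 : Finset (Finset ℕ)}

lemma Icc_two_mem_of_one_notMem (h𝒜 : IsLCIF n r 𝒜) (hn : r + 1 ≤ n) {W : Finset ℕ}
    (hW : W ∈ 𝒜) (hW1 : 1 ∉ W) : Icc 2 (r + 1) ∈ 𝒜 :=
  h𝒜.2.2 W hW _ (Icc_two_mem_chooseFam hn) (domLE_Icc_two (h𝒜.1 hW) hW1)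

/-- The sets `[1, r + 2] \ P` with `P ⊆ [2, r + 2]`, `#P = 2` are dominated by `W`, so they lie
in `𝒜` and `C` must meet each of them. -/
lemma exists_three_subset_Icc_of_not_pair_subset {W C : Finset ℕ} (h𝒜 : IsLCIF n r 𝒜)
    (hr : 1 ≤ r) (hn : r + 2 ≤ n) (hW : W ∈ 𝒜) (hW1 : 1 ∉ W) (hW23 : ¬ {2, 3} ⊆ W)
    (hC : C ∈ 𝒜) (hC1 : 1 ∉ C) : ∃ T ∈ (Icc 2 (r + 2)).powersetCard 3, T ⊆ C := by
  by_contra! h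
  have hsmall : #(C ∩ Icc 2 (r + 2)) ≤ 2 := by
    by_contra! h3
    obtain ⟨T, hT, hTc⟩ := exists_subset_card_eq h3
    exact h T (mem_powersetCard.2 ⟨hT.trans inter_subset_right, hTc⟩) (hT.trans inter_subset_left)
  obtain ⟨P, hCP, hP, hPc⟩ :=
    exists_subsuperset_card_eq inter_subset_right hsmall (by rw [Nat.card_Icc]; omega)
  have hdom := domLE_Icc_sdiff (h𝒜.1 hW) hW1 hW23 hP hPc
  have hB : Icc 1 (r + 2) \ P ∈ chooseFam n r :=
    mem_chooseFam.2 ⟨sdiff_subset.trans (Icc_subset_Icc_right hn),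
      hdom.1.trans (mem_chooseFam.1 (h𝒜.1 hW)).2⟩
  obtain ⟨a, ha⟩ := h𝒜.2.1 _ (h𝒜.2.2 W hW _ hB hdom) C hC
  obtain ⟨haB, haC⟩ := mem_inter.1 ha
  obtain ⟨ha, haP⟩ := mem_sdiff.1 haB
  have ha := mem_Icc.1 ha
  have ha1 : a ≠ 1 := fun h => hC1 (h ▸ haC)
  exact haP (hCP (mem_inter.2 ⟨haC, mem_Icc.2 ⟨by omega, ha.2⟩⟩))

lemma mem_sdiff_starFam {A : Finset ℕ} (h𝒜 : 𝒜 ⊆ chooseFam n r) :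
    A ∈ 𝒜 \ starFam n r ↔ A ∈ 𝒜 ∧ 1 ∉ A := by
  simp only [mem_sdiff, starFam, mem_filter, not_and]
  exact ⟨fun h => ⟨h.1, h.2 (h𝒜 h.1)⟩, fun h => ⟨h.1, fun _ => h.2⟩⟩

lemma card_sdiff_starFam_le_of_forall_exists_subset (h𝒜 : 𝒜 ⊆ chooseFam n r) (hr : 3 ≤ r)
    {𝒯 : Finset (Finset ℕ)} (h𝒯 : ∀ T ∈ 𝒯, T ⊆ Icc 1 n ∧ #T = 3)
    (hcov : ∀ C ∈ 𝒜, 1 ∉ C → ∃ T ∈ 𝒯, T ⊆ C) :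
    #(𝒜 \ starFam n r) ≤ #𝒯 * (n - 3).choose (r - 3) := by
  have h := card_le_mul_choose_of_forall_exists_subset (F := 𝒜 \ starFam n r) (Y := ∅)
    (empty_subset _) hr (fun T hT => ⟨(h𝒯 T hT).1, (h𝒯 T hT).2, disjoint_empty_right _⟩)
    fun C hC => by
      obtain ⟨hC, hC1⟩ := (mem_sdiff_starFam h𝒜).1 hC
      exact ⟨h𝒜 hC, disjoint_empty_right _, hcov C hC hC1⟩
  rwa [card_empty, Nat.sub_zero] at h

/-- Every member avoiding `1` contains a triple from a fixed family of at most `2 ^ (r + 1)`: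
the triples in `[2, r + 2]` if some member avoiding `1` misses `2` or `3`, and otherwise the
`{2, 3, u}` with `u` in a member of `𝒜 \ F₂`, which contains `1` but not `2, 3`. -/
lemma card_sdiff_starFam_le (h𝒜 : IsLCIF n r 𝒜) (hr : 3 ≤ r) (hn : r + 2 ≤ n)
    (h𝒜3 : ¬ 𝒜 ⊆ AHM n r 3) :
    #(𝒜 \ starFam n r) ≤ 2 ^ (r + 1) * (n - 3).choose (r - 3) := by
  by_cases hW : ∃ W ∈ 𝒜, 1 ∉ W ∧ ¬ {2, 3} ⊆ W
  · obtain ⟨W, hW, hW1, hW23⟩ := hW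
    refine (card_sdiff_starFam_le_of_forall_exists_subset h𝒜.1 hr
      (𝒯 := (Icc 2 (r + 2)).powersetCard 3) (fun T hT => ?_) fun C hC hC1 =>
        exists_three_subset_Icc_of_not_pair_subset h𝒜 (by omega) hn hW hW1 hW23 hC hC1).trans
      (Nat.mul_le_mul_right _ ?_)
    · obtain ⟨hT, hTc⟩ := mem_powersetCard.1 hT
      exact ⟨hT.trans (Icc_subset_Icc (by omega) hn), hTc⟩
    · rw [card_powersetCard]
      exact (Nat.choose_le_two_pow _ _).trans_eq (by simp)
  push Not at hW
  obtain ⟨A, hA, hA3⟩ := not_subset.1 h𝒜3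
  have hAc := h𝒜.1 hA
  have hA1 : 1 ∈ A := by
    by_contra hA1
    exact hA3 (mem_AHM.2 ⟨hAc, Or.inr (Icc_two_three ▸ hW A hA hA1)⟩)
  have hA23 : 2 ∉ A ∧ 3 ∉ A := by
    rw [← not_or, ← inter_pair_nonempty_iff, ← Icc_two_three]
    exact fun h => hA3 (mem_AHM.2 ⟨hAc, Or.inl ⟨hA1, h⟩⟩)
  obtain ⟨hAn, hAr⟩ := mem_chooseFam.1 hAc
  refine (card_sdiff_starFam_le_of_forall_exists_subset h𝒜.1 hr
    (𝒯 := (A.erase 1).image fun u => {2, 3, u}) (fun T hT => ?_) fun C hC hC1 => ?_).trans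
    (Nat.mul_le_mul_right _ ?_)
  · obtain ⟨u, hu, rfl⟩ := mem_image.1 hT
    have huA := mem_of_mem_erase hu
    have hu := mem_Icc.1 (hAn huA)
    refine ⟨?_, card_eq_three.2 ⟨2, 3, u, by decide, ?_, ?_, rfl⟩⟩
    · simp only [insert_subset_iff, singleton_subset_iff, mem_Icc]
      omega
    · exact fun h => hA23.1 (h ▸ huA)
    · exact fun h => hA23.2 (h ▸ huA)
  · obtain ⟨u, hu⟩ := h𝒜.2.1 C hC A hA
    obtain ⟨huC, huA⟩ := mem_inter.1 hu
    refine ⟨{2, 3, u}, mem_image.2 ⟨u, mem_erase.2 ⟨fun h => hC1 (h ▸ huC), huA⟩, rfl⟩, ?_⟩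
    have h23 := hW C hC hC1
    exact insert_subset (h23 (by simp)) (insert_subset (h23 (by simp)) (singleton_subset_iff.2 huC))
  · calc _ ≤ #(A.erase 1) := card_image_le
      _ = r - 1 := by rw [card_erase_of_mem hA1, hAr]
      _ ≤ 2 ^ (r + 1) := by have := Nat.lt_two_pow_self (n := r + 1); omega

lemma choose_le_hit_starFam_sdiff (h𝒜 : IsLCIF n r 𝒜) (hr : 2 ≤ r) {m : ℕ} (hmX : m ∈ X)
    (hm : r + 2 ≤ m) (hmn : m ≤ n) (h𝒜S : ¬ 𝒜 ⊆ starFam n r) :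
    (n - 2 - r).choose (r - 2) ≤ hit X (starFam n r \ 𝒜) := by
  obtain ⟨W, hW, hWS⟩ := not_subset.1 h𝒜S
  have hI := Icc_two_mem_of_one_notMem h𝒜 (by omega) hW fun h => hWS (mem_filter.2 ⟨h𝒜.1 hW, h⟩)
  have hcard := card_pinnedFam (n := n) (r := r) (K := {1, m}) (Y := Icc 2 (r + 1))
    (by simp only [insert_subset_iff, singleton_subset_iff, mem_Icc]; omega)
    (Icc_subset_Icc (by omega) (by omega))
    (by simp only [disjoint_insert_left, disjoint_singleton_left, mem_Icc]; omega)
    (by rw [card_pair (by omega)]; omega)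
  rw [card_pair (by omega), Nat.card_Icc, show r + 1 + 1 - 2 = r by omega] at hcard
  have hall : ∀ A ∈ pinnedFam n r {1, m} (Icc 2 (r + 1)), (A ∩ X).Nonempty := fun A hA =>
    ⟨m, mem_inter.2 ⟨(mem_pinnedFam.1 hA).2.1 (by simp), hmX⟩⟩
  rw [← hcard, ← hit_eq_card hall]
  refine hit_mono fun A hA => ?_
  obtain ⟨hA, hKA, hAY⟩ := mem_pinnedFam.1 hA
  refine mem_sdiff.2 ⟨mem_filter.2 ⟨hA, hKA (by simp)⟩, fun hA𝒜 => ?_⟩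
  obtain ⟨a, ha⟩ := h𝒜.2.1 A hA𝒜 _ hI
  exact disjoint_left.1 hAY (mem_inter.1 ha).1 (mem_inter.1 ha).2

end Core

section Tie

variable {n r : ℕ} {X : Finset ℕ}

lemma mem_Icc_four_of_mem_sdiff (hX : X ⊆ Icc 2 n) {x : ℕ} (hx : x ∈ X \ {2, 3}) :
    x ∈ Icc 4 n := by
  obtain ⟨hxX, hx23⟩ := mem_sdiff.1 hx
  have := mem_Icc.1 (hX hxX)
  simp only [mem_insert, mem_singleton, not_or] at hx23
  exact mem_Icc.2 ⟨by omega, this.2⟩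

lemma hit_pinnedFam_pair_eq (hn : 4 ≤ n) (hr : 3 ≤ r) (h23 : 2 ∈ X ∨ 3 ∈ X) :
    hit X (pinnedFam n r {2, 3} {1}) = (n - 4).choose (r - 3) + (n - 4).choose (r - 2) := by
  have hall : ∀ A ∈ pinnedFam n r {2, 3} {1}, (A ∩ X).Nonempty := fun A hA => by
    have h := (mem_pinnedFam.1 hA).2.1
    rcases h23 with h2 | h3
    · exact ⟨2, mem_inter.2 ⟨h (by simp), h2⟩⟩
    · exact ⟨3, mem_inter.2 ⟨h (by simp), h3⟩⟩
  rw [hit_eq_card hall,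
    card_pinnedFam (by simp only [insert_subset_iff, singleton_subset_iff, mem_Icc]; omega)
      (by simp only [singleton_subset_iff, mem_Icc]; omega) (by decide)
      (by rw [card_pair (by decide)]; omega),
    card_pair (by decide), card_singleton, show n - 2 - 1 = n - 4 + 1 by omega,
    show r - 2 = r - 3 + 1 by omega, Nat.choose_succ_succ]

lemma card_pinnedFam_one_of_mem (hX : X ⊆ Icc 2 n) (hr : 2 ≤ r) {x : ℕ}
    (hx : x ∈ X \ {2, 3}) : #(pinnedFam n r {1, x} {2, 3}) = (n - 4).choose (r - 2) := by
  have hx := mem_Icc.1 (mem_Icc_four_of_mem_sdiff hX hx)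
  rw [card_pinnedFam (by simp only [insert_subset_iff, singleton_subset_iff, mem_Icc]; omega)
    (by simp only [insert_subset_iff, singleton_subset_iff, mem_Icc]; omega)
    (by simp only [disjoint_insert_left, disjoint_singleton_left, mem_insert, mem_singleton]; omega)
    (by rw [card_pair (by omega)]; omega), card_pair (by omega), card_pair (by decide),
    Nat.sub_sub]

lemma choose_add_choose_le_hit_pinnedFam_one (hX : X ⊆ Icc 2 n) (hr : 2 ≤ r) {y z : ℕ}
    (hy : y ∈ X \ {2, 3}) (hz : z ∈ X \ {2, 3}) (hyz : y ≠ z) :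
    (n - 4).choose (r - 2) + (n - 5).choose (r - 2) ≤ hit X (pinnedFam n r {1} {2, 3}) := by
  have hy' := mem_Icc.1 (mem_Icc_four_of_mem_sdiff hX hy)
  have hz' := mem_Icc.1 (mem_Icc_four_of_mem_sdiff hX hz)
  have h₁ := card_pinnedFam_one_of_mem (r := r) hX hr hy
  have h₂ := card_pinnedFam (n := n) (r := r) (K := {1, z}) (Y := {2, 3, y})
    (by simp only [insert_subset_iff, singleton_subset_iff, mem_Icc]; omega)
    (by simp only [insert_subset_iff, singleton_subset_iff, mem_Icc]; omega)
    (by simp only [disjoint_insert_left, disjoint_singleton_left, mem_insert, mem_singleton]; omega)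
    (by rw [card_pair (by omega)]; omega)
  rw [card_pair (by omega), card_eq_three.2 ⟨2, 3, y, by decide, by omega, by omega, rfl⟩,
    show n - 2 - 3 = n - 5 by omega] at h₂
  have hdisj : Disjoint (pinnedFam n r {1, y} {2, 3}) (pinnedFam n r {1, z} {2, 3, y}) :=
    disjoint_left.2 fun A hA hA' =>
      disjoint_left.1 (mem_pinnedFam.1 hA').2.2
        ((mem_pinnedFam.1 hA).2.1 (mem_insert_of_mem (mem_singleton_self y))) (by simp)
  have hall : ∀ A ∈ pinnedFam n r {1, y} {2, 3} ∪ pinnedFam n r {1, z} {2, 3, y},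
      (A ∩ X).Nonempty := fun A hA => by
    rcases mem_union.1 hA with hA | hA
    · exact ⟨y, mem_inter.2 ⟨(mem_pinnedFam.1 hA).2.1 (by simp), (mem_sdiff.1 hy).1⟩⟩
    · exact ⟨z, mem_inter.2 ⟨(mem_pinnedFam.1 hA).2.1 (by simp), (mem_sdiff.1 hz).1⟩⟩
  rw [← h₁, ← h₂, ← card_union_of_disjoint hdisj, ← hit_eq_card hall]
  have h23y : ({2, 3} : Finset ℕ) ⊆ {2, 3, y} :=
    insert_subset_insert 2 (singleton_subset_iff.2 (mem_insert_self 3 {y}))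
  exact hit_mono (union_subset (pinnedFam_anti (by simp) subset_rfl)
    (pinnedFam_anti (by simp) h23y))

lemma hit_pinnedFam_one_le (hX : X ⊆ Icc 2 n) (hr : 2 ≤ r) (hn : 3 ≤ n)
    (hX1 : #(X \ {2, 3}) ≤ 1) : hit X (pinnedFam n r {1} {2, 3}) ≤ (n - 4).choose (r - 2) := by
  have h := card_le_mul_choose_of_forall_exists_subset (n := n) (r := r) (k := 2)
    (F := (pinnedFam n r {1} {2, 3}).filter fun A => (A ∩ X).Nonempty)
    (𝒯 := (X \ {2, 3}).image fun x => {1, x}) (Y := {2, 3})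
    (by simp only [insert_subset_iff, singleton_subset_iff, mem_Icc]; omega) hr
    (fun T hT => by
      obtain ⟨x, hx, rfl⟩ := mem_image.1 hT
      have hx := mem_Icc.1 (mem_Icc_four_of_mem_sdiff hX hx)
      refine ⟨by simp only [insert_subset_iff, singleton_subset_iff, mem_Icc]; omega,
        card_pair (by omega), ?_⟩
      simp only [disjoint_insert_left, disjoint_singleton_left, mem_insert, mem_singleton]
      omega)
    (fun A hA => by
      obtain ⟨hA, x, hx⟩ := mem_filter.1 hA
      obtain ⟨hA, h1A, hA23⟩ := mem_pinnedFam.1 hA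
      obtain ⟨hxA, hxX⟩ := mem_inter.1 hx
      exact ⟨hA, hA23, {1, x}, mem_image.2 ⟨x, mem_sdiff.2 ⟨hxX, disjoint_left.1 hA23 hxA⟩, rfl⟩,
        insert_subset (h1A (by simp)) (singleton_subset_iff.2 hxA)⟩)
  rw [card_pair (by decide), show n - 2 - 2 = n - 4 by omega] at h
  calc hit X _ ≤ _ := h
    _ ≤ 1 * (n - 4).choose (r - 2) := Nat.mul_le_mul_right _ (card_image_le.trans hX1)
    _ = _ := one_mul _

/-- Removing `{2, 3}` resp. `1` identifies the two families with the `(r - 2)`- resp.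
`(r - 1)`-subsets of `[4, n]`, and meeting `X` is an up-closed property of these. -/
lemma hit_pinnedFam_pair_lt (hX : X ⊆ Icc 2 n) (hXne : X.Nonempty) (h2 : 2 ∉ X) (h3 : 3 ∉ X)
    (hr : 3 ≤ r) (hn : 2 * r < n) :
    hit X (pinnedFam n r {2, 3} {1}) < hit X (pinnedFam n r {1} {2, 3}) := by
  have h1 : 1 ∉ X := fun h => by simpa using hX h
  have hY : ({2, 3} : Finset ℕ) ⊆ Icc 1 n := by
    simp only [insert_subset_iff, singleton_subset_iff, mem_Icc]; omega
  have h23X : Disjoint ({2, 3} : Finset ℕ) X :=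
    disjoint_insert_left.2 ⟨h2, disjoint_singleton_left.2 h3⟩
  set G := Icc 1 n \ ({1} ∪ {2, 3})
  have hP : hit X (pinnedFam n r {2, 3} {1}) = hit X (G.powersetCard (r - 2)) := by
    rw [hit_pinnedFam hY (by decide) (by rw [card_pair (by decide)]; omega) h23X, union_comm,
      card_pair (by decide)]
  have hQ : hit X (pinnedFam n r {1} {2, 3}) = hit X (G.powersetCard (r - 1)) := by
    rw [hit_pinnedFam (singleton_subset_iff.2 (mem_Icc.2 ⟨le_rfl, by omega⟩)) (by decide)
      (by rw [card_singleton]; omega) (disjoint_singleton_left.2 h1), card_singleton]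
  have hG : #G = n - 3 := by
    rw [card_Icc_sdiff_union (singleton_subset_iff.2 (mem_Icc.2 ⟨le_rfl, by omega⟩)) hY
      (by decide), card_singleton, card_pair (by decide)]
    omega
  have hgrow := card_filter_powersetCard_mul_le (G := G) (k := r - 2)
    (p := fun T => (T ∩ X).Nonempty) fun s t hst h => h.mono (inter_subset_inter_right hst)
  rw [hG, show r - 2 + 1 = r - 1 by omega] at hgrow
  have hpos : 0 < hit X (pinnedFam n r {1} {2, 3}) := by
    obtain ⟨x, hx⟩ := hXne
    have hx' : x ∈ X \ {2, 3} :=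
      mem_sdiff.2 ⟨hx, fun h => disjoint_left.1 h23X h hx⟩
    have hall : ∀ A ∈ pinnedFam n r {1, x} {2, 3}, (A ∩ X).Nonempty := fun A hA =>
      ⟨x, mem_inter.2 ⟨(mem_pinnedFam.1 hA).2.1 (by simp), hx⟩⟩
    calc 0 < (n - 4).choose (r - 2) := Nat.choose_pos (by omega)
      _ = hit X (pinnedFam n r {1, x} {2, 3}) := by
        rw [hit_eq_card hall, card_pinnedFam_one_of_mem hX (by omega) hx']
      _ ≤ _ := hit_mono (pinnedFam_anti (by simp) subset_rfl)
  rw [hQ] at hpos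
  rw [hP, hQ]
  rcases Nat.eq_zero_or_pos (hit X (G.powersetCard (r - 2))) with h0 | h0
  · exact h0 ▸ hpos
  · exact Nat.lt_of_mul_lt_mul_right (((Nat.mul_lt_mul_left h0).2 (by omega)).trans_le hgrow)

lemma hit_AHM_three_ne_hit_starFam (hX : X ⊆ Icc 2 n) (hXne : X.Nonempty) (hr : 3 ≤ r)
    (hn : 2 * r < n) (hchoose : (n - 4).choose (r - 3) < (n - 5).choose (r - 2)) :
    hit X (AHM n r 3) ≠ hit X (starFam n r) := by
  have hA := hit_sdiff_add_hit_inter (X := X) (AHM n r 3) (starFam n r)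
  have hS := hit_sdiff_add_hit_inter (X := X) (starFam n r) (AHM n r 3)
  rw [AHM_three_sdiff_starFam] at hA
  rw [starFam_sdiff_AHM_three, inter_comm] at hS
  suffices hit X (pinnedFam n r {2, 3} {1}) ≠ hit X (pinnedFam n r {1} {2, 3}) by omega
  by_cases h23 : 2 ∈ X ∨ 3 ∈ X
  · rw [hit_pinnedFam_pair_eq (by omega) hr h23]
    by_cases hX1 : #(X \ {2, 3}) ≤ 1
    · have := hit_pinnedFam_one_le hX (r := r) (by omega) (by omega) hX1
      have : 0 < (n - 4).choose (r - 3) := Nat.choose_pos (by omega)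
      omega
    · obtain ⟨y, hy, z, hz, hyz⟩ := one_lt_card.1 (not_le.1 hX1)
      have := choose_add_choose_le_hit_pinnedFam_one (r := r) hX (by omega) hy hz hyz
      omega
  · push Not at h23
    exact (hit_pinnedFam_pair_lt hX hXne h23.1 h23.2 hr hn).ne

end Tie

section Asymptotics

lemma mul_choose_lt_choose_sub {K c k n : ℕ} (h₁ : 2 * (c + k) ≤ n)
    (h₂ : K * (k + 1) * 2 ^ (k + 1) < n) : K * n.choose k < (n - c).choose (k + 1) := by
  have hn : 0 < n ^ k := Nat.pow_pos (by omega)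
  have hlow : n ^ (k + 1) ≤ 2 ^ (k + 1) * (n - c).descFactorial (k + 1) :=
    calc n ^ (k + 1) ≤ (2 * (n - c - k)) ^ (k + 1) := Nat.pow_le_pow_left (by omega) _
      _ = 2 ^ (k + 1) * (n - c - k) ^ (k + 1) := Nat.mul_pow _ _ _
      _ ≤ 2 ^ (k + 1) * (n - c).descFactorial (k + 1) := Nat.mul_le_mul_left _ <| by
          simpa [show n - c + 1 - (k + 1) = n - c - k by omega] using
            Nat.pow_sub_le_descFactorial (n - c) (k + 1)
  have key : (k + 1).factorial * (K * n.choose k) * 2 ^ (k + 1) <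
      (k + 1).factorial * (n - c).choose (k + 1) * 2 ^ (k + 1) :=
    calc (k + 1).factorial * (K * n.choose k) * 2 ^ (k + 1)
        = K * (k + 1) * 2 ^ (k + 1) * n.descFactorial k := by
          rw [Nat.descFactorial_eq_factorial_mul_choose, Nat.factorial_succ]; ring
      _ ≤ K * (k + 1) * 2 ^ (k + 1) * n ^ k :=
          Nat.mul_le_mul_left _ (Nat.descFactorial_le_pow n k)
      _ < n * n ^ k := Nat.mul_lt_mul_of_pos_right h₂ hn
      _ = n ^ (k + 1) := (pow_succ' n k).symm
      _ ≤ 2 ^ (k + 1) * (n - c).descFactorial (k + 1) := hlow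
      _ = (k + 1).factorial * (n - c).choose (k + 1) * 2 ^ (k + 1) := by
          rw [Nat.descFactorial_eq_factorial_mul_choose]; ring
  exact Nat.lt_of_mul_lt_mul_left (Nat.lt_of_mul_lt_mul_right key)

lemma eventually_mul_choose_lt_choose_sub (K c k : ℕ) :
    ∀ᶠ n in Filter.atTop, K * n.choose k < (n - c).choose (k + 1) :=
  ((Filter.eventually_ge_atTop _).and (Filter.eventually_gt_atTop _)).mono fun _ h =>
    mul_choose_lt_choose_sub h.1 h.2

lemma eventually_choose_bounds {r : ℕ} (hr : 3 ≤ r) :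
    ∀ᶠ n in Filter.atTop, 2 * r < n ∧
      2 ^ (r + 1) * (n - 3).choose (r - 3) < (n - 2 - r).choose (r - 2) ∧
      (n - 4).choose (r - 3) < (n - 5).choose (r - 2) := by
  have hk : r - 3 + 1 = r - 2 := by omega
  have h₁ := eventually_mul_choose_lt_choose_sub (2 ^ (r + 1)) (r + 2) (r - 3)
  have h₂ := (Filter.tendsto_sub_atTop_nat 4).eventually
    (eventually_mul_choose_lt_choose_sub 1 1 (r - 3))
  filter_upwards [Filter.eventually_gt_atTop (2 * r), h₁, h₂] with n hn h₁ h₂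
  rw [hk, ← Nat.sub_sub, Nat.sub_right_comm] at h₁
  rw [hk, one_mul, Nat.sub_sub] at h₂
  exact ⟨hn, (Nat.mul_le_mul_left _ (Nat.choose_le_choose _ (Nat.sub_le n 3))).trans_lt h₁, h₂⟩

end Asymptotics

section Main

variable {n r : ℕ} {X : Finset ℕ} {𝒜 : Finset (Finset ℕ)}

lemma hit_lt_hit_starFam_of_not_subset (h𝒜 : IsLCIF n r 𝒜) (h𝒜S : ¬ 𝒜 ⊆ starFam n r)
    (hopt : OptimalMLCIF n r X (starFam n r)) (hX : X ⊆ Icc 2 n) {m : ℕ} (hmX : m ∈ X)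
    (hm : r + 2 ≤ m) (hr : 3 ≤ r) (hn : 2 * r < n)
    (hchoose₁ : 2 ^ (r + 1) * (n - 3).choose (r - 3) < (n - 2 - r).choose (r - 2))
    (hchoose₂ : (n - 4).choose (r - 3) < (n - 5).choose (r - 2)) :
    hit X 𝒜 < hit X (starFam n r) := by
  by_cases h3 : 𝒜 ⊆ AHM n r 3
  · exact (hit_mono h3).trans_lt <| (hit_le_hit_starFam hopt (isLCIF_AHM le_rfl)).lt_of_ne
      (hit_AHM_three_ne_hit_starFam hX ⟨m, hmX⟩ hr hn hchoose₂)
  rw [hit_lt_hit_iff]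
  calc hit X (𝒜 \ starFam n r) ≤ #(𝒜 \ starFam n r) := hit_le_card
    _ ≤ 2 ^ (r + 1) * (n - 3).choose (r - 3) := card_sdiff_starFam_le h𝒜 hr (by omega) h3
    _ < (n - 2 - r).choose (r - 2) := hchoose₁
    _ ≤ hit X (starFam n r \ 𝒜) :=
        choose_le_hit_starFam_sdiff h𝒜 (by omega) hmX hm (mem_Icc.1 (hX hmX)).2 h𝒜S

lemma AHM_subset_of_filter_starFam_subset (h𝒜 : IsLCIF n r 𝒜) {m : ℕ} (hmX : m ∈ X)
    (hm : r + 2 ≤ m) (hmn : m ≤ n)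
    (hS : (starFam n r).filter (fun A => (A ∩ X).Nonempty) ⊆ 𝒜) : AHM n r m ⊆ 𝒜 := by
  intro A hA
  obtain ⟨hAc, hA⟩ := mem_AHM.1 hA
  obtain ⟨hAn, hAr⟩ := mem_chooseFam.1 hAc
  have mem_of_hit : ∀ {C}, C ∈ chooseFam n r → 1 ∈ C → (C ∩ X).Nonempty → C ∈ 𝒜 :=
    fun hC h1C hCX => hS (mem_filter.2 ⟨mem_filter.2 ⟨hC, h1C⟩, hCX⟩)
  rcases hA with ⟨h1A, x, hx⟩ | hA
  · obtain ⟨hxA, hx2, hxm⟩ := by simpa only [mem_inter, mem_Icc] using hx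
    by_cases hAX : (A ∩ X).Nonempty
    · exact mem_of_hit hAc h1A hAX
    have hmA : m ∉ A := fun h => hAX ⟨m, mem_inter.2 ⟨h, hmX⟩⟩
    have hdom := domLE_insert_erase hxA hmA hxm
    have hC : insert m (A.erase x) ∈ chooseFam n r := mem_chooseFam.2
      ⟨insert_subset (mem_Icc.2 ⟨by omega, hmn⟩) ((erase_subset _ _).trans hAn),
        hdom.1.symm.trans hAr⟩
    have h1C : 1 ∈ insert m (A.erase x) := mem_insert_of_mem (mem_erase.2 ⟨by omega, h1A⟩)
    exact h𝒜.2.2 _ (mem_of_hit hC h1C ⟨m, mem_inter.2 ⟨mem_insert_self _ _, hmX⟩⟩) A hAc hdom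
  · have := card_le_card hA
    rw [Nat.card_Icc, hAr] at this
    omega

end Main

/-- For `r ≥ 3` and `n` sufficiently large: for every nonempty
`X ⊆ [2,n]` such that the star is an optimal MLCIF for `X`, writing
`m = max X`, the LCIFs which are LCIF-optimal for `X` are precisely the LCIFs
`𝒜` with `AHM_m ⊆ 𝒜 ⊆ 𝒮`. -/
theorem stmt19 :
    ∀ r : ℕ, 3 ≤ r → ∃ N : ℕ, ∀ n : ℕ, N ≤ n →
      ∀ X : Finset ℕ, X ⊆ Finset.Icc 2 n → ∀ hX : X.Nonempty,
        OptimalMLCIF n r X (starFam n r) →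
        ∀ 𝒜 : Finset (Finset ℕ),
          OptimalLCIF n r X 𝒜 ↔
            (IsLCIF n r 𝒜 ∧ AHM n r (X.max' hX) ⊆ 𝒜 ∧ 𝒜 ⊆ starFam n r) := by
  intro r hr
  obtain ⟨N, hN⟩ := Filter.eventually_atTop.1 (eventually_choose_bounds hr)
  refine ⟨N, fun n hNn X hX hXne hopt 𝒜 => ?_⟩
  obtain ⟨hn, hchoose₁, hchoose₂⟩ := hN n hNn
  have hmX := X.max'_mem hXne
  have hXm : X ⊆ Icc 2 (X.max' hXne) := fun x hx =>
    mem_Icc.2 ⟨(mem_Icc.1 (hX hx)).1, X.le_max' x hx⟩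
  have hm := add_two_le_of_optimalMLCIF_starFam (by omega) (by omega) hXm hmX hopt
  rw [optimalLCIF_iff hopt]
  constructor
  · rintro ⟨h𝒜, hle⟩
    have hS : 𝒜 ⊆ starFam n r := by
      by_contra h𝒜S
      exact (hit_lt_hit_starFam_of_not_subset h𝒜 h𝒜S hopt hX hmX hm hr hn hchoose₁
        hchoose₂).not_ge hle
    exact ⟨h𝒜, AHM_subset_of_filter_starFam_subset h𝒜 hmX hm (mem_Icc.1 (hX hmX)).2
      (filter_subset_of_subset_of_hit_le hS hle), hS⟩
  · rintro ⟨h𝒜, hAHM, -⟩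
    exact ⟨h𝒜, card_le_card fun A hA =>
      mem_filter.2 ⟨hAHM (filter_starFam_subset_AHM hXm hA), (mem_filter.1 hA).2⟩⟩
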